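/- Let z = 1 + Re^{iθ} with R > 0 and Re(z) ≥ 0. Then 1/√2 ≤ √(R + 1/(2+R)) ≤ |p(1 + Re^{iθ})| ≤ √R + 1/√R, where p(z) = (1+z)^{−1/2} + (1−z)^{1/2} with principal square roots. -/

import Mathlib

open Complex

noncomputable def pSOR (z : ℂ) : ℂ := (1 + z) ^ (-(1 / 2) : ℂ) + (1 - z) ^ ((1 : ℂ) / 2)

lemma half_re (w : ℂ) (hw : w ≠ 0) :
    (w ^ ((1:ℂ)/2)).re = Real.sqrt (‖w‖) * Real.cos (w.arg / 2) := by
  rw [Complex.cpow_def_of_ne_zero hw, Complex.exp_re]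
  have h1 : (Complex.log w * (1/2)).re = Real.log (‖w‖) / 2 := by
    simp [Complex.mul_re, Complex.log_re, Complex.log_im]
    ring
  have h2 : (Complex.log w * (1/2)).im = w.arg / 2 := by
    simp [Complex.mul_im, Complex.log_re, Complex.log_im]
    ring
  rw [h1, h2]
  congr 1
  rw [Real.sqrt_eq_rpow, Real.rpow_def_of_pos (norm_pos_iff.mpr hw)]
  ring_nf

lemma half_im (w : ℂ) (hw : w ≠ 0) :
    (w ^ ((1:ℂ)/2)).im = Real.sqrt (‖w‖) * Real.sin (w.arg / 2) := by
  rw [Complex.cpow_def_of_ne_zero hw, Complex.exp_im]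
  have h1 : (Complex.log w * (1/2)).re = Real.log (‖w‖) / 2 := by
    simp [Complex.mul_re, Complex.log_re, Complex.log_im]
    ring
  have h2 : (Complex.log w * (1/2)).im = w.arg / 2 := by
    simp [Complex.mul_im, Complex.log_re, Complex.log_im]
    ring
  rw [h1, h2]
  congr 1
  rw [Real.sqrt_eq_rpow, Real.rpow_def_of_pos (norm_pos_iff.mpr hw)]
  ring_nf

lemma half_re_nonneg (w : ℂ) (hw : w ≠ 0) : 0 ≤ (w ^ ((1:ℂ)/2)).re := by
  rw [half_re w hw]
  apply mul_nonneg (Real.sqrt_nonneg _)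
  apply Real.cos_nonneg_of_mem_Icc
  constructor
  · linarith [Complex.neg_pi_lt_arg w, Real.pi_pos]
  · linarith [Complex.arg_le_pi w, Real.pi_pos]

set_option maxHeartbeats 1000000 in
theorem stmt6 (R θ : ℝ) (hR : 0 < R)
    (z : ℂ) (hz : z = 1 + (R : ℂ) * Complex.exp ((θ : ℂ) * Complex.I))
    (hre : 0 ≤ z.re) :
    1 / Real.sqrt 2 ≤ Real.sqrt (R + 1 / (2 + R)) ∧
    Real.sqrt (R + 1 / (2 + R)) ≤ ‖pSOR z‖ ∧
    ‖pSOR z‖ ≤ Real.sqrt R + 1 / Real.sqrt R := by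
  have hR2 : (0:ℝ) < 2 + R := by linarith
  -- basic data about 1+z and 1-z
  have h1z : (1 + z) = 2 + (R:ℂ) * Complex.exp ((θ:ℂ) * Complex.I) := by rw [hz]; ring
  have h2z : (1 - z) = -((R:ℂ) * Complex.exp ((θ:ℂ) * Complex.I)) := by rw [hz]; ring
  have hexp : Complex.exp ((θ:ℂ) * Complex.I)
      = ((Real.cos θ : ℝ) : ℂ) + ((Real.sin θ : ℝ) : ℂ) * Complex.I := by
    rw [Complex.exp_mul_I, Complex.ofReal_cos, Complex.ofReal_sin]
  have habsRe : ‖(R:ℂ) * Complex.exp ((θ:ℂ) * Complex.I)‖ = R := by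
    rw [norm_mul, Complex.norm_exp_ofReal_mul_I, Complex.norm_real, Real.norm_eq_abs, abs_of_pos hR, mul_one]
  have him1 : (1 + z).im = R * Real.sin θ := by
    rw [h1z, hexp]; simp [Complex.sin_ofReal_re, Complex.cos_ofReal_re]
  have hre1 : (1 + z).re = 2 + R * Real.cos θ := by
    rw [h1z, hexp]; simp [Complex.sin_ofReal_re, Complex.cos_ofReal_re]
  have him2 : (1 - z).im = -(R * Real.sin θ) := by
    rw [h2z, hexp]; simp [Complex.sin_ofReal_re, Complex.cos_ofReal_re]
  have hzre : z.re = 1 + R * Real.cos θ := by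
    rw [hz, hexp]; simp [Complex.sin_ofReal_re, Complex.cos_ofReal_re]
  have hre1pos : 0 < (1 + z).re := by
    rw [hre1]; rw [hzre] at hre; linarith
  have h1ne : (1 + z) ≠ 0 := by
    intro h; rw [h] at hre1pos; simp at hre1pos
  have h2ne : (1 - z) ≠ 0 := by
    rw [h2z]
    simp [Complex.exp_ne_zero, hR.ne']
  -- abs values
  have habs2 : ‖1 - z‖ = R := by
    rw [h2z, norm_neg, habsRe]
  set q : ℝ := ‖1 + z‖ with hq
  have hqpos : 0 < q := norm_pos_iff.mpr h1ne
  have hqle : q ≤ 2 + R := by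
    calc q ≤ ‖(2:ℂ)‖ + ‖(R:ℂ) * Complex.exp ((θ:ℂ) * Complex.I)‖ := by
          rw [hq, h1z]; exact norm_add_le _ _
      _ = 2 + R := by rw [habsRe]; simp
  have hqge : R ≤ q := by
    have h1 : q ^ 2 = (2 + R * Real.cos θ) ^ 2 + (R * Real.sin θ) ^ 2 := by
      rw [hq, Complex.sq_norm, Complex.normSq_apply, hre1, him1]; ring
    have h2 : (R * Real.sin θ) ^ 2 + (R * Real.cos θ) ^ 2 = R ^ 2 := by
      nlinarith [Real.sin_sq_add_cos_sq θ]
    have h3 : 0 ≤ 1 + R * Real.cos θ := by rw [hzre] at hre; linarith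
    have h4 : R ^ 2 ≤ q ^ 2 := by nlinarith
    have h5 := Real.sqrt_le_sqrt h4
    rwa [Real.sqrt_sq hR.le, Real.sqrt_sq hqpos.le] at h5
  -- the two summands
  set a : ℂ := (1 + z) ^ (-(1 / 2) : ℂ) with ha
  set b : ℂ := (1 - z) ^ ((1 : ℂ) / 2) with hb
  set b1 : ℂ := (1 + z) ^ ((1 : ℂ) / 2) with hb1
  have hab1 : a = b1⁻¹ := by
    rw [ha, hb1, ← Complex.cpow_neg]
  have habs_a : ‖a‖ = Real.sqrt q⁻¹ := by
    have : ((-(1/2) : ℂ)) = ((-(1/2) : ℝ) : ℂ) := by norm_num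
    rw [ha, this, Complex.norm_cpow_real, ← hq, Real.sqrt_inv, Real.sqrt_eq_rpow,
      ← Real.rpow_neg hqpos.le]
  have habs_b : ‖b‖ = Real.sqrt R := by
    rw [hb, show ((1:ℂ)/2) = ((1/2 : ℝ) : ℂ) by norm_num, Complex.norm_cpow_real, habs2,
      ← Real.sqrt_eq_rpow]
  -- cross term nonneg
  have hb1ne : b1 ≠ 0 := by
    rw [hb1]
    simp [Complex.cpow_eq_zero_iff, h1ne]
  have hnsb1 : 0 < Complex.normSq b1 := Complex.normSq_pos.2 hb1ne
  have hcross : 0 ≤ b1.re * b.re ∧ b1.im * b.im ≤ 0 := by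
    constructor
    · exact mul_nonneg (half_re_nonneg _ h1ne) (half_re_nonneg _ h2ne)
    · rw [hb1, hb, half_im _ h1ne, half_im _ h2ne]
      have key : Real.sin ((1+z).arg / 2) * Real.sin ((1-z).arg / 2) ≤ 0 := by
        rcases lt_trichotomy (R * Real.sin θ) 0 with hs | hs | hs
        · have ha1 : (1+z).arg < 0 := Complex.arg_neg_iff.2 (by rw [him1]; exact hs)
          have ha2 : 0 ≤ (1-z).arg := Complex.arg_nonneg_iff.2 (by rw [him2]; linarith)
          have s1 : Real.sin ((1+z).arg / 2) < 0 := by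
            apply Real.sin_neg_of_neg_of_neg_pi_lt (by linarith)
            linarith [Complex.neg_pi_lt_arg (1+z)]
          have s2 : 0 ≤ Real.sin ((1-z).arg / 2) := by
            apply Real.sin_nonneg_of_nonneg_of_le_pi (by linarith)
            linarith [Complex.arg_le_pi (1-z), Real.pi_pos]
          nlinarith
        · have ha1 : (1+z).arg = 0 := Complex.arg_eq_zero_iff.2 ⟨hre1pos.le, by rw [him1]; linarith⟩
          rw [ha1]; simp
        · have ha1 : 0 ≤ (1+z).arg := Complex.arg_nonneg_iff.2 (by rw [him1]; linarith)
          have ha2 : (1-z).arg < 0 := Complex.arg_neg_iff.2 (by rw [him2]; linarith)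
          have s1 : 0 ≤ Real.sin ((1+z).arg / 2) := by
            apply Real.sin_nonneg_of_nonneg_of_le_pi (by linarith)
            linarith [Complex.arg_le_pi (1+z), Real.pi_pos]
          have s2 : Real.sin ((1-z).arg / 2) < 0 := by
            apply Real.sin_neg_of_neg_of_neg_pi_lt (by linarith)
            linarith [Complex.neg_pi_lt_arg (1-z)]
          nlinarith
      nlinarith [Real.sqrt_nonneg (‖1+z‖), Real.sqrt_nonneg (‖1-z‖),
        mul_nonneg (Real.sqrt_nonneg (‖1+z‖)) (Real.sqrt_nonneg (‖1-z‖))]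
  have hcross' : 0 ≤ (a * (starRingEnd ℂ) b).re := by
    rw [hab1, Complex.mul_re]
    simp only [Complex.conj_re, Complex.conj_im]
    rw [Complex.inv_re, Complex.inv_im]
    have h1 : b1.re / Complex.normSq b1 * b.re - -b1.im / Complex.normSq b1 * -b.im
        = (b1.re * b.re + -(b1.im * b.im)) / Complex.normSq b1 := by ring
    rw [h1]
    apply div_nonneg _ hnsb1.le
    linarith [hcross.1, hcross.2]
  -- |p|^2
  have hpsq : (‖pSOR z‖)^2 = q⁻¹ + R + 2 * (a * (starRingEnd ℂ) b).re := by
    have : pSOR z = a + b := rfl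
    rw [this, Complex.sq_norm, Complex.normSq_add]
    rw [← Complex.sq_norm a, ← Complex.sq_norm b, habs_a, habs_b,
      Real.sq_sqrt (inv_nonneg.2 hqpos.le), Real.sq_sqrt hR.le]
  refine ⟨?_, ?_, ?_⟩
  · rw [show (1:ℝ)/Real.sqrt 2 = Real.sqrt (1/2) by
      rw [Real.sqrt_div' 1 (by norm_num)]; norm_num]
    apply Real.sqrt_le_sqrt
    have h0 : R + 1/(2+R) - 1/2 = (2*R^2 + 3*R) / (2*(2+R)) := by
      field_simp; ring
    have h1 : (0:ℝ) ≤ (2*R^2 + 3*R) / (2*(2+R)) :=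
      div_nonneg (by nlinarith) (by linarith)
    linarith
  · rw [show ‖pSOR z‖ = Real.sqrt ((‖pSOR z‖)^2) by
      rw [Real.sqrt_sq (norm_nonneg _)]]
    apply Real.sqrt_le_sqrt
    rw [hpsq]
    have h1 : 1/(2+R) ≤ q⁻¹ := by
      rw [← one_div]
      exact one_div_le_one_div_of_le hqpos hqle
    linarith
  · have htri : ‖pSOR z‖ ≤ ‖a‖ + ‖b‖ := by
      exact norm_add_le a b
    rw [habs_a, habs_b] at htri
    have : Real.sqrt q⁻¹ ≤ 1 / Real.sqrt R := by
      rw [Real.sqrt_inv, one_div]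
      exact inv_anti₀ (Real.sqrt_pos.2 hR) (Real.sqrt_le_sqrt hqge)
    linarith
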